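/- arXiv:2112.02152 — 4 statements merged into one kernel-verified Lean document; each statement's English description precedes it below -/
import Mathlib

section
/- Let E be a subset of ℤ² that is (r, r*)-sparse, where r = (r₁, r₂) and r* = (r*₁, r*₂) are pairs of positive reals with r*₁ > 2r₁ and r*₂ > 2r₂. Then the relation on E defined by x ∼ y iff y ∈ E_x is an equivalence relation; in particular, for all x, y, y' ∈ E, if y ∈ E_x and y' ∈ E_x then y' ∈ E_y, and for any x, y ∈ E the sets E_x and E_y are either equal or disjoint. -/
/-- The rectangle of radius `r` centered at `x`:
`B(x,r) = {y : |y₁ − x₁| < r₁ ∧ |y₂ − x₂| < r₂}`. -/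
def rect (x : ℤ × ℤ) (r : ℝ × ℝ) : Set (ℤ × ℤ) :=
  {y | |(y.1 : ℝ) - (x.1 : ℝ)| < r.1 ∧ |(y.2 : ℝ) - (x.2 : ℝ)| < r.2}

/-- `E` is `(r, rs)`-sparse: every point `x ∈ E` is `(r, rs)`-isolated, i.e.
`E ∩ B(x, rs) ⊆ B(x, r)`. -/
def Sparse (E : Set (ℤ × ℤ)) (r rs : ℝ × ℝ) : Prop :=
  ∀ x ∈ E, E ∩ rect x rs ⊆ rect x r

/-- `E_x = B(x, r) ∩ E`. -/
def cluster (E : Set (ℤ × ℤ)) (r : ℝ × ℝ) (x : ℤ × ℤ) : Set (ℤ × ℤ) :=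
  rect x r ∩ E

/-- For an `(r, r*)`-sparse set `E` with `r*₁ > 2r₁`, `r*₂ > 2r₂`, the relation
`x ∼ y ⟺ y ∈ E_x` on `E` is an equivalence relation (reflexive, symmetric, transitive),
and the sets `E_x` are pairwise equal or disjoint. -/
theorem sparse_cluster_equivalence
    (r rs : ℝ × ℝ) (hr1 : 0 < r.1) (hr2 : 0 < r.2)
    (hrs1 : 0 < rs.1) (hrs2 : 0 < rs.2)
    (h1 : 2 * r.1 < rs.1) (h2 : 2 * r.2 < rs.2)
    (E : Set (ℤ × ℤ)) (hsp : Sparse E r rs) :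
    (∀ x ∈ E, x ∈ cluster E r x) ∧
    (∀ x ∈ E, ∀ y ∈ E, y ∈ cluster E r x → x ∈ cluster E r y) ∧
    (∀ x ∈ E, ∀ y ∈ E, ∀ y' ∈ E,
      y ∈ cluster E r x → y' ∈ cluster E r x → y' ∈ cluster E r y) ∧
    (∀ x ∈ E, ∀ y ∈ E,
      cluster E r x = cluster E r y ∨ Disjoint (cluster E r x) (cluster E r y)) := by

  -- symmetry helper
  have symm : ∀ x ∈ E, ∀ y, y ∈ cluster E r x → x ∈ cluster E r y := by
    rintro x hx y ⟨⟨hy1, hy2⟩, hyE⟩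
    refine ⟨⟨?_, ?_⟩, hx⟩ <;> rw [abs_sub_comm] <;> assumption
  have trans : ∀ x ∈ E, ∀ y ∈ E, ∀ y', y ∈ cluster E r x → y' ∈ cluster E r x →
      y' ∈ cluster E r y := by
    rintro x hx y hy y' ⟨⟨hy1, hy2⟩, _⟩ ⟨⟨hy'1, hy'2⟩, hy'E⟩
    have hrs : y' ∈ rect y rs := by
      constructor
      · calc |(y'.1 : ℝ) - y.1| = |((y'.1 : ℝ) - x.1) + (x.1 - y.1)| := by ring_nf
          _ ≤ |(y'.1 : ℝ) - x.1| + |(x.1 : ℝ) - y.1| := abs_add_le _ _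
          _ < r.1 + r.1 := add_lt_add hy'1 (by rwa [abs_sub_comm])
          _ < rs.1 := by linarith
      · calc |(y'.2 : ℝ) - y.2| = |((y'.2 : ℝ) - x.2) + (x.2 - y.2)| := by ring_nf
          _ ≤ |(y'.2 : ℝ) - x.2| + |(x.2 : ℝ) - y.2| := abs_add_le _ _
          _ < r.2 + r.2 := add_lt_add hy'2 (by rwa [abs_sub_comm])
          _ < rs.2 := by linarith
    exact ⟨hsp y hy ⟨hy'E, hrs⟩, hy'E⟩
  have refl : ∀ x ∈ E, x ∈ cluster E r x := by
    intro x hx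
    refine ⟨⟨?_, ?_⟩, hx⟩ <;> simp [hr1, hr2]
  refine ⟨refl, fun x hx y _ h => symm x hx y h,
    fun x hx y hy y' _ h h' => trans x hx y hy y' h h', ?_⟩
  intro x hx y hy
  by_cases hdis : Disjoint (cluster E r x) (cluster E r y)
  · exact Or.inr hdis
  left
  obtain ⟨z, hzx, hzy⟩ := Set.not_disjoint_iff.mp hdis
  have hzE : z ∈ E := hzx.2
  ext w
  constructor
  · intro hw
    have hwE : w ∈ E := hw.2
    -- w ∈ E_z, y ∈ E_z, so w ∈ E_y
    have hwz : w ∈ cluster E r z := trans x hx z hzE w hzx hw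
    have hyz : y ∈ cluster E r z := symm y hy z hzy
    exact trans z hzE y hy w hyz hwz
  · intro hw
    have hwz : w ∈ cluster E r z := trans y hy z hzE w hzy hw
    have hxz : x ∈ cluster E r z := symm x hx z hzx
    exact trans z hzE x hx w hxz hwz
end

section
/- Let E be a subset of ℤ² that is (r, r*)-sparse, where r = (r₁, r₂) and r* = (r*₁, r*₂) are pairs of positive reals with r*₁ > 2r₁ and r*₂ > 2r₂. Then for every x ∈ E, the set E_x is contained in a rectangle of size r₁ × r₂: for all y, y' ∈ E_x one has |y₁ − y'₁| < r₁ and |y₂ − y'₂| < r₂. -/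
/-- For an `(r, r*)`-sparse set `E` with `r*₁ > 2r₁`, `r*₂ > 2r₂`, each set
`E_x` is contained in a rectangle of size `r₁ × r₂`: any two of its points have
coordinate distances `< r₁` and `< r₂`. -/
theorem sparse_cluster_small
    (r rs : ℝ × ℝ) (hr1 : 0 < r.1) (hr2 : 0 < r.2)
    (hrs1 : 0 < rs.1) (hrs2 : 0 < rs.2)
    (h1 : 2 * r.1 < rs.1) (h2 : 2 * r.2 < rs.2)
    (E : Set (ℤ × ℤ)) (hsp : Sparse E r rs) :
    ∀ x ∈ E, ∀ y ∈ cluster E r x, ∀ y' ∈ cluster E r x,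
      |(y.1 : ℝ) - (y'.1 : ℝ)| < r.1 ∧ |(y.2 : ℝ) - (y'.2 : ℝ)| < r.2 := by
  intro x hx y hy y' hy'
  obtain ⟨⟨hy1, hy2⟩, hyE⟩ := hy
  obtain ⟨⟨hy'1, hy'2⟩, hy'E⟩ := hy'
  have hmem : y' ∈ rect y rs := by
    constructor
    · calc |(y'.1 : ℝ) - y.1| ≤ |(y'.1 : ℝ) - x.1| + |(x.1 : ℝ) - y.1| := by
            have := abs_sub_le ((y'.1 : ℝ)) (x.1) (y.1); linarith
        _ < r.1 + r.1 := by rw [abs_sub_comm (x.1 : ℝ)]; linarith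
        _ < rs.1 := by linarith
    · calc |(y'.2 : ℝ) - y.2| ≤ |(y'.2 : ℝ) - x.2| + |(x.2 : ℝ) - y.2| := by
            have := abs_sub_le ((y'.2 : ℝ)) (x.2) (y.2); linarith
        _ < r.2 + r.2 := by rw [abs_sub_comm (x.2 : ℝ)]; linarith
        _ < rs.2 := by linarith
  have := hsp y hyE ⟨hy'E, hmem⟩
  obtain ⟨h1', h2'⟩ := this
  rw [abs_sub_comm] at h1' h2'
  exact ⟨h1', h2'⟩
end

section
/- Let E be a subset of ℤ² that is (r, r*)-sparse, where r = (r₁, r₂) and r* = (r*₁, r*₂) are pairs of positive reals with r*₁ > 2r₁ and r*₂ > 2r₂. Then every rectangle of size (r*₁ − r₁) × (r*₂ − r₂) intersects at most one of the sets E_x: for all x, x' ∈ E and all y ∈ E_x, y' ∈ E_{x'}, if |y₁ − y'₁| < r*₁ − r₁ and |y₂ − y'₂| < r*₂ − r₂, then E_x = E_{x'}. -/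
/-- For an `(r, r*)`-sparse set `E` with `r*₁ > 2r₁`, `r*₂ > 2r₂`, every
rectangle of size `(r*₁ − r₁) × (r*₂ − r₂)` intersects at most one of the sets `E_x`:
if `y ∈ E_x` and `y' ∈ E_{x'}` are within `r*₁ − r₁` horizontally and `r*₂ − r₂`
vertically, then `E_x = E_{x'}`. -/
theorem sparse_cluster_separation
    (r rs : ℝ × ℝ) (hr1 : 0 < r.1) (hr2 : 0 < r.2)
    (hrs1 : 0 < rs.1) (hrs2 : 0 < rs.2)
    (h1 : 2 * r.1 < rs.1) (h2 : 2 * r.2 < rs.2)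
    (E : Set (ℤ × ℤ)) (hsp : Sparse E r rs) :
    ∀ x ∈ E, ∀ x' ∈ E, ∀ y ∈ cluster E r x, ∀ y' ∈ cluster E r x',
      |(y.1 : ℝ) - (y'.1 : ℝ)| < rs.1 - r.1 → |(y.2 : ℝ) - (y'.2 : ℝ)| < rs.2 - r.2 →
      cluster E r x = cluster E r x' := by
  -- Auxiliary: if clusters of x and x' share a point, then cluster x' ⊆ cluster x.
  have key : ∀ x ∈ E, ∀ x' ∈ E, ∀ z, z ∈ cluster E r x → z ∈ cluster E r x' →
      cluster E r x' ⊆ cluster E r x := by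
    intro x hx x' hx' z ⟨hz1, hzE⟩ ⟨hz2, _⟩
    -- x' ∈ rect x r
    have hx'r : x' ∈ rect x r := by
      apply hsp x hx
      refine ⟨hx', ?_, ?_⟩
      · calc |(x'.1 : ℝ) - x.1| ≤ |(x'.1 : ℝ) - z.1| + |(z.1 : ℝ) - x.1| := by
              have := abs_sub_abs_le_abs_sub ((x'.1:ℝ) - z.1) 0
              simpa using abs_sub_le ((x'.1:ℝ)) (z.1:ℝ) (x.1:ℝ)
          _ < r.1 + r.1 := by
              have h1' := hz2.1; have h2' := hz1.1
              rw [abs_sub_comm] at h1'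
              linarith
          _ ≤ rs.1 := by linarith
      · calc |(x'.2 : ℝ) - x.2| ≤ |(x'.2 : ℝ) - z.2| + |(z.2 : ℝ) - x.2| :=
              abs_sub_le _ _ _
          _ < r.2 + r.2 := by
              have h1' := hz2.2; have h2' := hz1.2
              rw [abs_sub_comm] at h1'
              linarith
          _ ≤ rs.2 := by linarith
    intro w ⟨hw1, hwE⟩
    refine ⟨hsp x hx ⟨hwE, ?_, ?_⟩, hwE⟩
    · calc |(w.1 : ℝ) - x.1| ≤ |(w.1 : ℝ) - x'.1| + |(x'.1 : ℝ) - x.1| :=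
            abs_sub_le _ _ _
        _ < r.1 + r.1 := by have := hw1.1; have := hx'r.1; linarith
        _ < rs.1 := by linarith
    · calc |(w.2 : ℝ) - x.2| ≤ |(w.2 : ℝ) - x'.2| + |(x'.2 : ℝ) - x.2| :=
            abs_sub_le _ _ _
        _ < r.2 + r.2 := by have := hw1.2; have := hx'r.2; linarith
        _ < rs.2 := by linarith
  intro x hx x' hx' y hy y' hy' hd1 hd2
  -- y' ∈ cluster E r x
  have hy'x : y' ∈ cluster E r x := by
    refine ⟨hsp x hx ⟨hy'.2, ?_, ?_⟩, hy'.2⟩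
    · calc |(y'.1 : ℝ) - x.1| ≤ |(y'.1 : ℝ) - y.1| + |(y.1 : ℝ) - x.1| :=
            abs_sub_le _ _ _
        _ < (rs.1 - r.1) + r.1 := by
            have := hy.1.1
            rw [abs_sub_comm] at hd1
            linarith
        _ = rs.1 := by ring
    · calc |(y'.2 : ℝ) - x.2| ≤ |(y'.2 : ℝ) - y.2| + |(y.2 : ℝ) - x.2| :=
            abs_sub_le _ _ _
        _ < (rs.2 - r.2) + r.2 := by
            have := hy.1.2
            rw [abs_sub_comm] at hd2
            linarith
        _ = rs.2 := by ring
  exact Set.Subset.antisymm (key x' hx' x hx y' hy' hy'x) (key x hx x' hx' y' hy'x hy')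
end

section
/- Sparsity Lemma (almost-sure sparsity): Let Q_k = B_{k+1}/B_k and V_k = S_{k+1}/S_k and assume lim_{k→∞} log(Q_k V_k)/1.5^k = 0. Then there is an ε₀ > 0 such that for every 0 < ε ≤ ε₀ and every ε-bounded random subset E of ℤ × ℤ≥0, with probability 1 the set E is sparse, i.e. P(⋂_k E^(k) = ∅) = 1. -/
/-!
If `x` survives `k` rounds of deletion, then `E` contains `2 ^ k` points near `x` arranged along
a binary tree: `x ∈ E^(k+1)` has a partner `y ∈ E^(k)` inside `B(x, γ(B_{k+1}, S_{k+1}))` but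
outside `B(x, β(B_k, S_k))`, and the level-`k` point sets of `x` and `y` are disjoint since each
lies within `3γ/2 ⋅ (B_k, S_k)` of its centre. The number `T_k` of such trees satisfies
`T_k ≤ M_k T_{k-1}²`, where `M_k ≈ 25 γ² B_{k+1} S_{k+1} = exp (O(1.5^k))` by the growth
hypothesis; as `1.5 < 2` this gives `T_k ≤ C ^ 2 ^ k`. Hence `P(x ∈ E^(k+1)) ≤ (C ε) ^ 2 ^ k → 0`
for `ε < 1 / C`, and a countable union over `x` finishes the proof.
-/

open MeasureTheory Filter
open scoped ENNReal

/-- The rectangle of radius `r` centered at the space-time point `x ∈ ℤ × ℤ≥0`. -/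
def rectZN (x : ℤ × ℕ) (r : ℝ × ℝ) : Set (ℤ × ℕ) :=
  {y | |(y.1 : ℝ) - (x.1 : ℝ)| < r.1 ∧ |(y.2 : ℝ) - (x.2 : ℝ)| < r.2}

/-- The residue operation: `resid β γ B S E k` is `E^(k+1)`, where `E^(1) = E` and
`E^(k+1)` is obtained from `E^(k)` by deleting its
`(β(B_k, S_k), γ(B_{k+1}, S_{k+1}))`-isolated points. -/
def resid (β γ : ℝ) (B S : ℕ → ℕ) (E : Set (ℤ × ℕ)) : ℕ → Set (ℤ × ℕ)
  | 0 => E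
  | k + 1 =>
      {x ∈ resid β γ B S E k |
        ¬ (resid β γ B S E k ∩ rectZN x (γ * (B (k + 2) : ℝ), γ * (S (k + 2) : ℝ)) ⊆
            rectZN x (β * (B (k + 1) : ℝ), β * (S (k + 1) : ℝ)))}

namespace Sparsity

open Real

section Rectangles

variable {x y a : ℤ × ℕ} {r s : ℝ × ℝ}

lemma mem_rectZN_comm : y ∈ rectZN x r ↔ x ∈ rectZN y r := by
  simp only [rectZN, Set.mem_ofPred_eq, abs_sub_comm]

lemma mem_rectZN_trans (ha : a ∈ rectZN y r) (hy : y ∈ rectZN x s) : a ∈ rectZN x (r + s) := by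
  obtain ⟨ha₁, ha₂⟩ := ha
  obtain ⟨hy₁, hy₂⟩ := hy
  constructor
  · calc |(a.1 : ℝ) - x.1| ≤ |(a.1 : ℝ) - y.1| + |(y.1 : ℝ) - x.1| := abs_sub_le _ _ _
      _ < r.1 + s.1 := add_lt_add ha₁ hy₁
  · calc |(a.2 : ℝ) - x.2| ≤ |(a.2 : ℝ) - y.2| + |(y.2 : ℝ) - x.2| := abs_sub_le _ _ _
      _ < r.2 + s.2 := add_lt_add ha₂ hy₂

lemma rectZN_mono (h : r ≤ s) : rectZN x r ⊆ rectZN x s :=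
  fun _ hy => ⟨hy.1.trans_le h.1, hy.2.trans_le h.2⟩

lemma disjoint_rectZN (hy : y ∉ rectZN x (r + r)) : Disjoint (rectZN x r) (rectZN y r) :=
  Set.disjoint_left.2 fun _ hx hy' => hy (mem_rectZN_trans (mem_rectZN_comm.1 hy') hx)

noncomputable def box (x : ℤ × ℕ) (n m : ℕ) : Finset (ℤ × ℕ) :=
  Finset.Icc (x.1 - n) (x.1 + n) ×ˢ Finset.Icc (x.2 - m) (x.2 + m)

lemma card_box_le (x : ℤ × ℕ) (n m : ℕ) : (box x n m).card ≤ (2 * n + 1) * (2 * m + 1) := by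
  rw [box, Finset.card_product, Int.card_Icc, Nat.card_Icc]
  gcongr <;> omega

lemma rectZN_subset_box : rectZN x r ⊆ box x ⌈r.1⌉₊ ⌈r.2⌉₊ := by
  rintro y ⟨hy₁, hy₂⟩
  have h₁ := abs_lt.1 (hy₁.trans_le (Nat.le_ceil r.1))
  have h₂ := abs_lt.1 (hy₂.trans_le (Nat.le_ceil r.2))
  have hlo₁ : x.1 - ⌈r.1⌉₊ < y.1 := by exact_mod_cast (by linarith : (x.1 : ℝ) - ⌈r.1⌉₊ < y.1)
  have hhi₁ : y.1 < x.1 + ⌈r.1⌉₊ := by exact_mod_cast (by linarith : (y.1 : ℝ) < x.1 + ⌈r.1⌉₊)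
  have hlo₂ : x.2 < y.2 + ⌈r.2⌉₊ := by exact_mod_cast (by linarith : (x.2 : ℝ) < y.2 + ⌈r.2⌉₊)
  have hhi₂ : y.2 < x.2 + ⌈r.2⌉₊ := by exact_mod_cast (by linarith : (y.2 : ℝ) < x.2 + ⌈r.2⌉₊)
  simp only [box, Finset.coe_product, Set.mem_prod, Finset.coe_Icc, Set.mem_Icc]
  omega

lemma two_mul_ceil_add_one_le {t : ℝ} (ht : 1 ≤ t) : 2 * (⌈t⌉₊ : ℝ) + 1 ≤ 5 * t := by
  linarith [Nat.ceil_lt_add_one (zero_le_one.trans ht)]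

end Rectangles

section Clusters

variable {α : Type*} [DecidableEq α] (R : ℕ → α → Finset α)

def clusters : ℕ → α → Finset (Finset α)
  | 0, x => {{x}}
  | k + 1, x => (R k x).biUnion fun y =>
      (clusters k x ×ˢ clusters k y).image fun p => p.1 ∪ p.2

variable {R}

lemma union_mem_clusters_succ {k : ℕ} {x y : α} {A₁ A₂ : Finset α}
    (h₁ : A₁ ∈ clusters R k x) (hy : y ∈ R k x) (h₂ : A₂ ∈ clusters R k y) :
    A₁ ∪ A₂ ∈ clusters R (k + 1) x :=
  Finset.mem_biUnion.2 ⟨y, hy, Finset.mem_image.2 ⟨(A₁, A₂), Finset.mem_product.2 ⟨h₁, h₂⟩, rfl⟩⟩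

lemma card_clusters_succ_le (k : ℕ) (x : α) :
    (clusters R (k + 1) x).card ≤ ∑ y ∈ R k x, (clusters R k x).card * (clusters R k y).card :=
  Finset.card_biUnion_le.trans <| Finset.sum_le_sum fun _ _ =>
    Finset.card_image_le.trans (Finset.card_product _ _).le

/-- The exponent `2 ⋅ 2 ^ k - 2 ⋅ 1.5 ^ k` is the exact solution of `e (k + 1) = 1.5 ^ k + 2 e k`,
`e 0 = 0`. -/
lemma card_clusters_le_exp (c : ℝ) (hR : ∀ k x, ((R k x).card : ℝ) ≤ exp (c * 1.5 ^ k))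
    (k : ℕ) (x : α) : ((clusters R k x).card : ℝ) ≤ exp (c * (2 * 2 ^ k - 2 * 1.5 ^ k)) := by
  induction k generalizing x with
  | zero => simp [clusters]
  | succ k ih =>
    calc ((clusters R (k + 1) x).card : ℝ)
        ≤ ∑ y ∈ R k x, ((clusters R k x).card * (clusters R k y).card : ℝ) := by
          exact_mod_cast card_clusters_succ_le k x
      _ ≤ ∑ _y ∈ R k x, exp (c * (2 * 2 ^ k - 2 * 1.5 ^ k)) ^ 2 :=
          Finset.sum_le_sum fun y _ => by
            rw [sq]; exact mul_le_mul (ih x) (ih y) (by positivity) (by positivity)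
      _ ≤ exp (c * 1.5 ^ k) * exp (c * (2 * 2 ^ k - 2 * 1.5 ^ k)) ^ 2 := by
          rw [Finset.sum_const, nsmul_eq_mul]
          exact mul_le_mul_of_nonneg_right (hR k x) (by positivity)
      _ = exp (c * (2 * 2 ^ (k + 1) - 2 * 1.5 ^ (k + 1))) := by
          rw [← exp_nat_mul, ← exp_add]; congr 1; push_cast; ring

lemma card_clusters_le_exp_pow {c : ℝ} (hc : 0 ≤ c)
    (hR : ∀ k x, ((R k x).card : ℝ) ≤ exp (c * 1.5 ^ k)) (k : ℕ) (x : α) :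
    ((clusters R k x).card : ℝ) ≤ exp (2 * c) ^ 2 ^ k := by
  refine (card_clusters_le_exp c hR k x).trans ?_
  rw [← exp_nat_mul, exp_le_exp]
  push_cast
  nlinarith [pow_nonneg (by norm_num : (0 : ℝ) ≤ 1.5) k]

end Clusters

section Residues

variable {β γ : ℝ} {B S : ℕ → ℕ} {E : Set (ℤ × ℕ)}

lemma mem_resid_succ {k : ℕ} {x : ℤ × ℕ} :
    x ∈ resid β γ B S E (k + 1) ↔ x ∈ resid β γ B S E k ∧
      ∃ y ∈ resid β γ B S E k, y ∈ rectZN x (γ * B (k + 2), γ * S (k + 2)) ∧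
        y ∉ rectZN x (β * B (k + 1), β * S (k + 1)) := by
  simp only [resid, Set.mem_sep_iff, Set.not_subset, Set.mem_inter_iff, and_assoc]

noncomputable def neighbourhood (γ : ℝ) (B S : ℕ → ℕ) (k : ℕ) (x : ℤ × ℕ) : Finset (ℤ × ℕ) :=
  box x ⌈γ * B (k + 2)⌉₊ ⌈γ * S (k + 2)⌉₊

/-- The radius `3γ/2 ⋅ (B (k + 1), S (k + 1))` is chosen so that two such rectangles around
centres `β ⋅ (B (k + 1), S (k + 1))` apart are disjoint (as `3γ ≤ β`), and so that it absorbs the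
step `γ ⋅ (B (k + 2), S (k + 2))` to the next level (as `3 B (k + 1) ≤ B (k + 2)`). -/
lemma exists_mem_clusters_of_mem_resid (hγ : 0 < γ) (hβ : 3 * γ ≤ β) (hB : 0 < B 1)
    (hS : 0 < S 1) (hBrat : ∀ k, 3 * B (k + 1) ≤ B (k + 2))
    (hSrat : ∀ k, 3 * S (k + 1) ≤ S (k + 2)) (k : ℕ) (x : ℤ × ℕ)
    (hx : x ∈ resid β γ B S E k) :
    ∃ A ∈ clusters (neighbourhood γ B S) k x, A.card = 2 ^ k ∧ ↑A ⊆ E ∧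
      ↑A ⊆ rectZN x (3 * γ / 2 * B (k + 1), 3 * γ / 2 * S (k + 1)) := by
  induction k generalizing x with
  | zero =>
    refine ⟨{x}, Finset.mem_singleton_self _, rfl, by simpa [resid] using hx, ?_⟩
    have hB₁ : (0 : ℝ) < B 1 := by exact_mod_cast hB
    have hS₁ : (0 : ℝ) < S 1 := by exact_mod_cast hS
    simp only [Finset.coe_singleton, Set.singleton_subset_iff]
    constructor <;> simp only [sub_self, abs_zero] <;> positivity
  | succ k ih =>
    obtain ⟨hxk, y, hyk, hy_near, hy_far⟩ := mem_resid_succ.1 hx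
    obtain ⟨A₁, hA₁, hA₁card, hA₁E, hA₁x⟩ := ih x hxk
    obtain ⟨A₂, hA₂, hA₂card, hA₂E, hA₂y⟩ := ih y hyk
    have hBk : (3 * B (k + 1) : ℝ) ≤ B (k + 2) := by exact_mod_cast hBrat k
    have hSk : (3 * S (k + 1) : ℝ) ≤ S (k + 2) := by exact_mod_cast hSrat k
    have hBk' : (0 : ℝ) ≤ B (k + 1) := by positivity
    have hSk' : (0 : ℝ) ≤ S (k + 1) := by positivity
    have hdisj : Disjoint A₁ A₂ := by
      refine Finset.disjoint_coe.1 ((disjoint_rectZN fun hy => hy_far ?_).mono hA₁x hA₂y)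
      refine rectZN_mono ?_ hy
      simp only [Prod.mk_add_mk, Prod.mk_le_mk]
      constructor <;> nlinarith
    have hy_mem : y ∈ neighbourhood γ B S k x := by
      have := rectZN_subset_box hy_near
      rwa [neighbourhood]
    refine ⟨A₁ ∪ A₂, union_mem_clusters_succ hA₁ hy_mem hA₂, ?_, ?_, ?_⟩
    · rw [Finset.card_union_of_disjoint hdisj, hA₁card, hA₂card, pow_succ, mul_two]
    · rw [Finset.coe_union]; exact Set.union_subset hA₁E hA₂E
    · rw [Finset.coe_union]
      refine Set.union_subset (hA₁x.trans (rectZN_mono ?_)) fun a ha =>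
        rectZN_mono ?_ (mem_rectZN_trans (hA₂y ha) hy_near)
      all_goals
        simp only [Prod.mk_add_mk, Prod.mk_le_mk]
        constructor <;> nlinarith

end Residues

section Growth

lemma exists_log_le_of_tendsto {q : ℕ → ℝ}
    (hq : Tendsto (fun k => logb 2 (q k) / 1.5 ^ k) atTop (nhds 0)) :
    ∃ D, 0 ≤ D ∧ ∀ k, log (q k) ≤ D * 1.5 ^ k := by
  obtain ⟨D, hD⟩ := hq.bddAbove_range
  refine ⟨max D 0 * log 2, by positivity, fun k => ?_⟩
  have hk : logb 2 (q k) / 1.5 ^ k ≤ max D 0 := (hD ⟨k, rfl⟩).trans (le_max_left _ _)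
  rw [div_le_iff₀ (by positivity), ← log_div_log, div_le_iff₀ (log_pos one_lt_two)] at hk
  linarith

lemma log_le_of_log_div_le {a : ℕ → ℝ} {D : ℝ} (ha : ∀ k, 0 < a (k + 1))
    (h : ∀ k, log (a (k + 2) / a (k + 1)) ≤ D * 1.5 ^ (k + 1)) (k : ℕ) :
    log (a (k + 1)) ≤ log (a 1) + D * (3 * 1.5 ^ k - 3) := by
  induction k with
  | zero => simp
  | succ k ih =>
    have hsplit : log (a (k + 2)) = log (a (k + 1)) + log (a (k + 2) / a (k + 1)) := by
      rw [log_div (ha (k + 1)).ne' (ha k).ne']; ring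
    rw [hsplit]
    linarith [h k, show D * (3 * 1.5 ^ (k + 1) - 3) = D * (3 * 1.5 ^ k - 3) + D * 1.5 ^ (k + 1)
      by ring]

lemma three_mul_le_of_ratio {β : ℝ} {m n : ℕ} (hβ : 3 / 2 ≤ β) (h : 2 * β * m ≤ n) :
    3 * m ≤ n := by
  have : (3 * m : ℝ) ≤ n := by nlinarith [(Nat.cast_nonneg m : (0 : ℝ) ≤ m)]
  exact_mod_cast this

lemma pos_of_three_mul_le {B : ℕ → ℕ} (h₁ : 0 < B 1) (h : ∀ k, 3 * B (k + 1) ≤ B (k + 2)) :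
    ∀ k, 0 < B (k + 1)
  | 0 => h₁
  | k + 1 => by
    have := pos_of_three_mul_le h₁ h k; have := h k; show 0 < B (k + 2); omega

lemma card_neighbourhood_le {γ : ℝ} {B S : ℕ → ℕ} (hγ : 1 ≤ γ) (k : ℕ) (x : ℤ × ℕ)
    (hB : 0 < B (k + 2)) (hS : 0 < S (k + 2)) :
    ((neighbourhood γ B S k x).card : ℝ) ≤ 25 * γ ^ 2 * (B (k + 2) * S (k + 2)) := by
  have hB' : (1 : ℝ) ≤ B (k + 2) := by exact_mod_cast hB
  have hS' : (1 : ℝ) ≤ S (k + 2) := by exact_mod_cast hS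
  calc ((neighbourhood γ B S k x).card : ℝ)
      ≤ (2 * ⌈γ * B (k + 2)⌉₊ + 1) * (2 * ⌈γ * S (k + 2)⌉₊ + 1) := by
        exact_mod_cast card_box_le _ _ _
    _ ≤ (5 * (γ * B (k + 2))) * (5 * (γ * S (k + 2))) := by
        gcongr <;> exact two_mul_ceil_add_one_le (by nlinarith)
    _ = 25 * γ ^ 2 * (B (k + 2) * S (k + 2)) := by ring

/-- The growth hypothesis makes `log (B (k + 2) S (k + 2)) = O(1.5 ^ k)`. -/
lemma exists_card_neighbourhood_le_exp {γ : ℝ} {B S : ℕ → ℕ} (hγ : 1 ≤ γ) (hB₁ : B 1 = 1)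
    (hS₁ : S 1 = 1) (hBrat : ∀ k, 3 * B (k + 1) ≤ B (k + 2))
    (hSrat : ∀ k, 3 * S (k + 1) ≤ S (k + 2))
    (hgrowth : Tendsto
      (fun k : ℕ => logb 2 (((B (k + 1) : ℝ) / B k) * ((S (k + 1) : ℝ) / S k)) / 1.5 ^ k)
      atTop (nhds 0)) :
    ∃ c, 0 ≤ c ∧ ∀ k x, ((neighbourhood γ B S k x).card : ℝ) ≤ exp (c * 1.5 ^ k) := by
  have hB := pos_of_three_mul_le (by omega) hBrat
  have hS := pos_of_three_mul_le (by omega) hSrat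
  set a : ℕ → ℝ := fun k => B k * S k
  have ha : ∀ k, 0 < a (k + 1) := fun k => by simp only [a]; have := hB k; have := hS k; positivity
  obtain ⟨D, hD, hlog⟩ := exists_log_le_of_tendsto hgrowth
  have hratio : ∀ k, log (a (k + 2) / a (k + 1)) ≤ D * 1.5 ^ (k + 1) := fun k => by
    simpa only [a, mul_div_mul_comm] using hlog (k + 1)
  have hγ' : 0 ≤ log (25 * γ ^ 2) := log_nonneg (by nlinarith)
  refine ⟨log (25 * γ ^ 2) + 4.5 * D, by positivity, fun k x => ?_⟩
  have ha₂ : log (a (k + 2)) ≤ 4.5 * D * 1.5 ^ k := by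
    have ha₁ : a 1 = 1 := by simp [a, hB₁, hS₁]
    have := log_le_of_log_div_le ha hratio (k + 1)
    rw [ha₁, log_one, pow_succ] at this
    linarith
  have h15 : (1 : ℝ) ≤ 1.5 ^ k := one_le_pow₀ (by norm_num)
  calc ((neighbourhood γ B S k x).card : ℝ)
      ≤ 25 * γ ^ 2 * a (k + 2) := card_neighbourhood_le hγ k x (hB (k + 1)) (hS (k + 1))
    _ ≤ exp (log (25 * γ ^ 2) * 1.5 ^ k) * exp (4.5 * D * 1.5 ^ k) := by
        gcongr
        · calc 25 * γ ^ 2 = exp (log (25 * γ ^ 2)) := (exp_log (by positivity)).symm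
            _ ≤ _ := exp_le_exp.2 (le_mul_of_one_le_right hγ' h15)
        · calc a (k + 2) = exp (log (a (k + 2))) := (exp_log (ha (k + 1))).symm
            _ ≤ _ := exp_le_exp.2 ha₂
    _ = exp ((log (25 * γ ^ 2) + 4.5 * D) * 1.5 ^ k) := by rw [← exp_add]; ring_nf

end Growth

section Probability

variable {Ω : Type*} [MeasurableSpace Ω] {P : Measure Ω}

lemma measure_exists_subset_le {α : Type*} {E : Ω → Set α} {ε : ℝ≥0∞}
    (hE : ∀ A : Finset α, P {ω | ↑A ⊆ E ω} ≤ ε ^ A.card) (F : Finset (Finset α)) {n : ℕ}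
    (hF : ∀ A ∈ F, A.card = n) : P {ω | ∃ A ∈ F, ↑A ⊆ E ω} ≤ F.card * ε ^ n := by
  have hunion : {ω | ∃ A ∈ F, ↑A ⊆ E ω} = ⋃ A ∈ F, {ω | ↑A ⊆ E ω} := by ext; simp
  calc P {ω | ∃ A ∈ F, ↑A ⊆ E ω}
      ≤ ∑ A ∈ F, P {ω | ↑A ⊆ E ω} := hunion ▸ measure_biUnion_finset_le _ _
    _ ≤ ∑ _A ∈ F, ε ^ n := Finset.sum_le_sum fun A hA => hF A hA ▸ hE A
    _ = F.card * ε ^ n := by rw [Finset.sum_const, nsmul_eq_mul]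

lemma measure_eq_zero_of_le_pow_two_pow {s : Set Ω} {q : ℝ≥0∞} (hq : q < 1)
    (h : ∀ k : ℕ, P s ≤ q ^ 2 ^ k) : P s = 0 :=
  nonpos_iff_eq_zero.1 <| ge_of_tendsto' ((ENNReal.tendsto_pow_atTop_nhds_zero_of_lt_one hq).comp
    (tendsto_pow_atTop_atTop_of_one_lt one_lt_two)) h

lemma measure_setOf_eq_empty_eq_one [IsProbabilityMeasure P] {α : Type*} [Countable α]
    {F : Ω → Set α} (h : ∀ x, P {ω | x ∈ F ω} = 0) : P {ω | F ω = ∅} = 1 := by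
  have hnull : P {ω | F ω = ∅}ᶜ = 0 := by
    refine measure_mono_null (fun ω hω => ?_) (measure_iUnion_null h)
    obtain ⟨x, hx⟩ := Set.nonempty_iff_ne_empty.2 hω
    exact Set.mem_iUnion.2 ⟨x, hx⟩
  rw [measure_congr (ae_eq_univ.2 hnull), measure_univ]

lemma measure_setOf_mem_resid_le {β γ : ℝ} {B S : ℕ → ℕ} (hγ : 0 < γ) (hβ : 3 * γ ≤ β)
    (hB : 0 < B 1) (hS : 0 < S 1) (hBrat : ∀ k, 3 * B (k + 1) ≤ B (k + 2))
    (hSrat : ∀ k, 3 * S (k + 1) ≤ S (k + 2)) {ε : ℝ≥0∞} {E : Ω → Set (ℤ × ℕ)}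
    (hE : ∀ A : Finset (ℤ × ℕ), P {ω | ↑A ⊆ E ω} ≤ ε ^ A.card) (x : ℤ × ℕ) (k : ℕ) :
    P {ω | x ∈ resid β γ B S (E ω) k} ≤
      (clusters (neighbourhood γ B S) k x).card * ε ^ 2 ^ k := by
  set F := (clusters (neighbourhood γ B S) k x).filter fun A : Finset (ℤ × ℕ) => A.card = 2 ^ k
  calc P {ω | x ∈ resid β γ B S (E ω) k}
      ≤ P {ω | ∃ A ∈ F, ↑A ⊆ E ω} := measure_mono fun ω hω => by
        obtain ⟨A, hA, hAcard, hAE, -⟩ :=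
          exists_mem_clusters_of_mem_resid hγ hβ hB hS hBrat hSrat k x hω
        exact ⟨A, Finset.mem_filter.2 ⟨hA, hAcard⟩, hAE⟩
    _ ≤ F.card * ε ^ 2 ^ k := measure_exists_subset_le hE F fun A hA => (Finset.mem_filter.1 hA).2
    _ ≤ (clusters (neighbourhood γ B S) k x).card * ε ^ 2 ^ k := by
        gcongr
        exact Finset.filter_subset _ _

end Probability

end Sparsity

open Sparsity Real

theorem sparsity_almost_sure_general
    (β γ : ℝ) (hγ : 1 < γ) (hβ : 3 * γ ≤ β)
    (B S : ℕ → ℕ) (hB1 : B 1 = 1) (hS1 : S 1 = 1)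
    (hBratio : ∀ k, 1 ≤ k → 2 * β * (B k : ℝ) ≤ (B (k + 1) : ℝ))
    (hSratio : ∀ k, 1 ≤ k → 2 * β * (S k : ℝ) ≤ (S (k + 1) : ℝ))
    (hgrowth : Tendsto
      (fun k : ℕ => Real.logb 2 (((B (k + 1) : ℝ) / (B k : ℝ)) * ((S (k + 1) : ℝ) / (S k : ℝ)))
        / (1.5 : ℝ) ^ k) atTop (nhds 0)) :
    ∃ ε₀ : ℝ≥0∞, 0 < ε₀ ∧
      ∀ ε : ℝ≥0∞, 0 < ε → ε ≤ ε₀ →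
        ∀ (Ω : Type*) [MeasurableSpace Ω] (P : Measure Ω) [IsProbabilityMeasure P]
          (E : Ω → Set (ℤ × ℕ)),
          (∀ A : Finset (ℤ × ℕ), MeasurableSet {ω | ↑A ⊆ E ω}) →
          (∀ A : Finset (ℤ × ℕ), P {ω | ↑A ⊆ E ω} ≤ ε ^ A.card) →
          P {ω | (⋂ k : ℕ, resid β γ B S (E ω) k) = ∅} = 1 := by
  have hBrat : ∀ k, 3 * B (k + 1) ≤ B (k + 2) := fun k =>
    three_mul_le_of_ratio (by linarith) (hBratio (k + 1) k.succ_pos)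
  have hSrat : ∀ k, 3 * S (k + 1) ≤ S (k + 2) := fun k =>
    three_mul_le_of_ratio (by linarith) (hSratio (k + 1) k.succ_pos)
  obtain ⟨c, hc, hR⟩ := exists_card_neighbourhood_le_exp hγ.le hB1 hS1 hBrat hSrat hgrowth
  refine ⟨ENNReal.ofReal (1 / (2 * exp (2 * c))), by positivity, fun ε _ hε Ω _ P _ E _ hE => ?_⟩
  refine measure_setOf_eq_empty_eq_one fun x =>
    measure_eq_zero_of_le_pow_two_pow (q := ENNReal.ofReal (1 / 2)) (by norm_num) fun k => ?_
  have hcard : ((clusters (neighbourhood γ B S) k x).card : ℝ≥0∞) ≤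
      ENNReal.ofReal (exp (2 * c)) ^ 2 ^ k := by
    rw [← ENNReal.ofReal_pow (exp_pos _).le, ← ENNReal.ofReal_natCast]
    exact ENNReal.ofReal_le_ofReal (card_clusters_le_exp_pow hc hR k x)
  calc P {ω | x ∈ ⋂ k, resid β γ B S (E ω) k}
      ≤ P {ω | x ∈ resid β γ B S (E ω) k} := measure_mono fun ω hω => Set.mem_iInter.1 hω k
    _ ≤ (clusters (neighbourhood γ B S) k x).card * ε ^ 2 ^ k :=
        measure_setOf_mem_resid_le (by linarith) hβ (by omega) (by omega) hBrat hSrat hE x k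
    _ ≤ ENNReal.ofReal (exp (2 * c)) ^ 2 ^ k * ENNReal.ofReal (1 / (2 * exp (2 * c))) ^ 2 ^ k := by
        gcongr
    _ = ENNReal.ofReal (1 / 2) ^ 2 ^ k := by
        rw [← mul_pow, ← ENNReal.ofReal_mul (exp_pos _).le]
        congr 2
        field_simp

/-- Sparsity Lemma, almost-sure sparsity: under the growth assumption
`lim_k log(Q_k V_k)/1.5^k = 0` with `Q_k = B_{k+1}/B_k`, `V_k = S_{k+1}/S_k`, there is an
`ε₀ > 0` such that for every `0 < ε ≤ ε₀` and every ε-bounded random subset `E` of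
`ℤ × ℤ≥0`, with probability 1 the set `E` is sparse: `P(⋂_k E^(k) = ∅) = 1`. -/
theorem sparsity_almost_sure
    (β γ : ℝ) (hγ : 1 < γ) (hβ : 3 * γ ≤ β)
    (B S : ℕ → ℕ) (hB1 : B 1 = 1) (hS1 : S 1 = 1)
    (hBmono : ∀ k, 1 ≤ k → B k < B (k + 1))
    (hSmono : ∀ k, 1 ≤ k → S k < S (k + 1))
    (hBratio : ∀ k, 1 ≤ k → 2 * β * (B k : ℝ) ≤ (B (k + 1) : ℝ))
    (hSratio : ∀ k, 1 ≤ k → 2 * β * (S k : ℝ) ≤ (S (k + 1) : ℝ))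
    (hgrowth : Tendsto
      (fun k : ℕ => Real.logb 2 (((B (k + 1) : ℝ) / (B k : ℝ)) * ((S (k + 1) : ℝ) / (S k : ℝ)))
        / (1.5 : ℝ) ^ k) atTop (nhds 0)) :
    ∃ ε₀ : ℝ≥0∞, 0 < ε₀ ∧
      ∀ ε : ℝ≥0∞, 0 < ε → ε ≤ ε₀ →
        ∀ (Ω : Type*) [MeasurableSpace Ω] (P : Measure Ω) [IsProbabilityMeasure P]
          (E : Ω → Set (ℤ × ℕ)),
          (∀ A : Finset (ℤ × ℕ), MeasurableSet {ω | ↑A ⊆ E ω}) →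
          (∀ A : Finset (ℤ × ℕ), P {ω | ↑A ⊆ E ω} ≤ ε ^ A.card) →
          P {ω | (⋂ k : ℕ, resid β γ B S (E ω) k) = ∅} = 1 :=
  sparsity_almost_sure_general β γ hγ hβ B S hB1 hS1 hBratio hSratio hgrowth
end
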